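/- Let g, h, y : (t₀, ∞) → ℝ be nonnegative locally integrable functions such that y' ≤ g·y + h (in the sense that y is absolutely continuous on compact subintervals with this differential inequality a.e.), and suppose there are positive constants γ, a₁, a₂, a₃ such that for every t ≥ t₀: ∫_t^{t+γ} g ≤ a₁, ∫_t^{t+γ} h ≤ a₂, and ∫_t^{t+γ} y ≤ a₃. Then for all t ≥ t₀ + γ, y(t) ≤ (a₃/γ + a₂) e^{a₁}. -/

import Mathlib

/-!
Pick `s ∈ (t - γ, t)` with `y s ≤ a₃ / γ`; it exists because `∫_{t-γ}^t y ≤ a₃`. On `[s, t]`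
the function `y` lies below `Z τ = y s + ∫_s^τ (g y + h)`, and `Z` is absolutely continuous with
`Z' = g y + h ≤ g Z + h` a.e., so `Z e^{-G}`, with `G τ = ∫_s^τ g`, grows by at most `∫_s^t h`.
Hence `y t ≤ (y s + ∫_s^t h) e^{∫_s^t g} ≤ (a₃ / γ + a₂) e^{a₁}`, since `[s, t]` lies inside the
window `[s, s + γ]`.
-/

open MeasureTheory Set

theorem LipschitzOnWith.comp_absolutelyContinuousOnInterval {X Y : Type*} [PseudoMetricSpace X]
    [PseudoMetricSpace Y] {φ : X → Y} {K : NNReal} {s : Set X} {f : ℝ → X} {a b : ℝ}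
    (hφ : LipschitzOnWith K φ s) (hf : AbsolutelyContinuousOnInterval f a b)
    (hfs : MapsTo f (uIcc a b) s) : AbsolutelyContinuousOnInterval (φ ∘ f) a b := by
  rw [absolutelyContinuousOnInterval_iff] at hf ⊢
  intro ε hε
  obtain ⟨δ, hδ, hfδ⟩ := hf (ε / (K + 1)) (by positivity)
  refine ⟨δ, hδ, fun E hE hEδ => ?_⟩
  calc ∑ i ∈ Finset.range E.1, dist ((φ ∘ f) (E.2 i).1) ((φ ∘ f) (E.2 i).2)
      ≤ ∑ i ∈ Finset.range E.1, K * dist (f (E.2 i).1) (f (E.2 i).2) :=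
        Finset.sum_le_sum fun i hi =>
          hφ.dist_le_mul _ (hfs (hE.1 i hi).1) _ (hfs (hE.1 i hi).2)
    _ = K * ∑ i ∈ Finset.range E.1, dist (f (E.2 i).1) (f (E.2 i).2) := (Finset.mul_sum ..).symm
    _ ≤ K * (ε / (K + 1)) := by gcongr; exact (hfδ E hE hEδ).le
    _ < ε := by rw [mul_div_assoc', div_lt_iff₀ (by positivity)]; nlinarith

theorem AbsolutelyContinuousOnInterval.comp_contDiff {φ f : ℝ → ℝ} {a b : ℝ}
    (hφ : ContDiff ℝ 1 φ) (hf : AbsolutelyContinuousOnInterval f a b) :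
    AbsolutelyContinuousOnInterval (fun x => φ (f x)) a b := by
  obtain ⟨C, hC⟩ := hf.exists_bound
  obtain ⟨K, hK⟩ := (hφ.contDiffOn (s := Icc (-C) C)).exists_lipschitzOnWith one_ne_zero
    (convex_Icc _ _) isCompact_Icc
  exact hK.comp_absolutelyContinuousOnInterval hf fun x hx => abs_le.1 (hC x hx)

theorem le_mul_exp_integral_of_le_add_integral {g h y : ℝ → ℝ} {c s t : ℝ} (hst : s ≤ t)
    (hg : ∀ u ∈ Icc s t, 0 ≤ g u) (hh : ∀ u ∈ Icc s t, 0 ≤ h u)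
    (hgi : IntervalIntegrable g volume s t) (hhi : IntervalIntegrable h volume s t)
    (hgyi : IntervalIntegrable (fun u => g u * y u) volume s t)
    (hy : ∀ τ ∈ Icc s t, y τ ≤ c + ∫ u in s..τ, (g u * y u + h u)) :
    y t ≤ (c + ∫ u in s..t, h u) * Real.exp (∫ u in s..t, g u) := by
  set G := fun τ => ∫ u in s..τ, g u
  set Z := fun τ => c + ∫ u in s..τ, (g u * y u + h u)
  set E := fun τ => Real.exp (-G τ)
  have hs : s ∈ uIcc s t := left_mem_uIcc
  have hfi := hgyi.add hhi
  have hZ : AbsolutelyContinuousOnInterval Z s t :=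
    ((LipschitzWith.const c).lipschitzOnWith (s := uIcc s t)).absolutelyContinuousOnInterval.fun_add
      (hfi.absolutelyContinuousOnInterval_intervalIntegral hs)
  have hE : AbsolutelyContinuousOnInterval E s t :=
    (hgi.absolutelyContinuousOnInterval_intervalIntegral hs).fun_neg.comp_contDiff Real.contDiff_exp
  have hE_le_one : ∀ τ ∈ Icc s t, E τ ≤ 1 := fun τ hτ =>
    Real.exp_le_one_iff.2 <| neg_nonpos.2 <|
      intervalIntegral.integral_nonneg hτ.1 fun u hu => hg u ⟨hu.1, hu.2.trans hτ.2⟩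
  have hderiv : ∀ᵐ x, x ∈ uIoc s t →
      deriv Z x * E x + Z x * deriv E x = (g x * y x + h x - g x * Z x) * E x := by
    filter_upwards [hfi.ae_hasDerivAt_integral, hgi.ae_hasDerivAt_integral] with x hZx hGx hx
    have hx' := uIoc_subset_uIcc hx
    have hEx : HasDerivAt E (Real.exp (-G x) * -g x) x := (hGx hx' s hs).fun_neg.exp
    rw [((hZx hx' s hs).const_add c).deriv, hEx.deriv]
    ring
  have hFi : IntervalIntegrable (fun x => (g x * y x + h x - g x * Z x) * E x) volume s t :=
    (hfi.sub (hgi.mul_continuousOn hZ.continuousOn)).mul_continuousOn hE.continuousOn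
  have hZE : Z t * E t - c ≤ ∫ u in s..t, h u := by
    have hZs : Z s * E s = c := by simp [Z, E, G]
    rw [← hZs, ← hZ.integral_deriv_mul_eq_sub hE, intervalIntegral.integral_congr_ae hderiv]
    refine intervalIntegral.integral_mono_on hst hFi hhi fun x hx => ?_
    have : g x * y x ≤ g x * Z x := mul_le_mul_of_nonneg_left (hy x hx) (hg x hx)
    nlinarith [hE_le_one x hx, Real.exp_pos (-G x), hh x hx]
  calc y t ≤ Z t := hy t ⟨hst, le_rfl⟩
    _ = Z t * E t * Real.exp (G t) := by
      rw [mul_assoc, ← Real.exp_add, neg_add_cancel, Real.exp_zero, mul_one]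
    _ ≤ (c + ∫ u in s..t, h u) * Real.exp (G t) := by gcongr; linarith

theorem le_mul_exp_integral_of_sub_le_integral {g h y : ℝ → ℝ} {s t : ℝ} (hst : s ≤ t)
    (hg : ∀ u ∈ Icc s t, 0 ≤ g u) (hh : ∀ u ∈ Icc s t, 0 ≤ h u) (hys : 0 ≤ y s)
    (hgi : IntervalIntegrable g volume s t) (hhi : IntervalIntegrable h volume s t)
    (hy : ∀ τ ∈ Icc s t, y τ - y s ≤ ∫ u in s..τ, (g u * y u + h u)) :
    y t ≤ (y s + ∫ u in s..t, h u) * Real.exp (∫ u in s..t, g u) := by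
  by_cases hgy : IntervalIntegrable (fun u => g u * y u) volume s t
  · exact le_mul_exp_integral_of_le_add_integral hst hg hh hgi hhi hgy
      fun τ hτ => by linarith [hy τ hτ]
  · -- then `∫ (g y + h)` is the junk value `0`, so `hy` says `y t ≤ y s`
    have hyt := hy t ⟨hst, le_rfl⟩
    rw [intervalIntegral.integral_undef fun hi => hgy (by simpa using hi.sub hhi)] at hyt
    have hG : 0 ≤ ∫ u in s..t, g u := intervalIntegral.integral_nonneg hst hg
    have hH : 0 ≤ ∫ u in s..t, h u := intervalIntegral.integral_nonneg hst hh
    nlinarith [Real.one_le_exp hG]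

theorem exists_mem_Ioo_le_intervalIntegral_div {f : ℝ → ℝ} {a b : ℝ} (hab : a < b)
    (hf : IntervalIntegrable f volume a b) :
    ∃ x ∈ Ioo a b, f x ≤ (∫ u in a..b, f u) / (b - a) := by
  obtain ⟨x, hx, hfx⟩ := exists_le_setAverage (s := Ioo a b) (μ := volume) (by simp [hab])
    (by simp) (hf.1.mono_set Ioo_subset_Ioc_self)
  refine ⟨x, hx, hfx.trans_eq ?_⟩
  rw [setAverage_eq, intervalIntegral.integral_of_le hab.le, integral_Ioc_eq_integral_Ioo,
    Real.volume_real_Ioo_of_le hab.le, smul_eq_mul, div_eq_inv_mul]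

theorem intervalIntegrable_of_intervalIntegral_le {f : ℝ → ℝ} {a b I : ℝ} (hab : a < b)
    (hf : ∀ u ∈ Ioc a b, 0 ≤ f u) (hfi : ∀ a' ∈ Ioo a b, IntervalIntegrable f volume a' b)
    (hI : ∀ a' ∈ Ioo a b, ∫ u in a'..b, f u ≤ I) : IntervalIntegrable f volume a b := by
  obtain ⟨u, -, hu, hlim⟩ := exists_seq_strictAnti_tendsto' hab
  refine (intervalIntegrable_iff_integrableOn_Ioc_of_le hab.le).2 <|
    integrableOn_Ioc_of_intervalIntegral_norm_bounded_left (I := I) (fun n => (hfi _ (hu n)).1)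
      hlim (Filter.Eventually.of_forall fun n => ?_)
  have hsub : Ioc (u n) b ⊆ Ioc a b := Ioc_subset_Ioc_left (hu n).1.le
  rw [setIntegral_congr_fun measurableSet_Ioc fun x hx => Real.norm_of_nonneg (hf x (hsub hx)),
    ← intervalIntegral.integral_of_le (hu n).2.le]
  exact hI _ (hu n)

section Window

variable {f : ℝ → ℝ} {t₀ γ A : ℝ}

theorem integral_le_of_integral_window_le (hf : ∀ u, t₀ < u → 0 ≤ f u) {s t : ℝ} (hs : t₀ ≤ s)
    (hfi : IntervalIntegrable f volume s (s + γ)) (hA : ∫ u in s..(s + γ), f u ≤ A)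
    (hst : s ≤ t) (hts : t ≤ s + γ) : ∫ u in s..t, f u ≤ A :=
  (intervalIntegral.integral_mono_interval le_rfl hst hts
    ((ae_restrict_iff' measurableSet_Ioc).2 (ae_of_all _ fun u hu => hf u (hs.trans_lt hu.1)))
    hfi).trans hA

theorem exists_mem_Ioo_le_div_of_integral_window_le (hγ : 0 < γ) (hf : ∀ u, t₀ < u → 0 ≤ f u)
    (hfi : ∀ a b, t₀ < a → a ≤ b → IntervalIntegrable f volume a b)
    (hA : ∀ a, t₀ ≤ a → ∫ u in a..(a + γ), f u ≤ A) {t : ℝ} (ht : t₀ + γ ≤ t) :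
    ∃ s ∈ Ioo (t - γ) t, f s ≤ A / γ := by
  -- for `t = t₀ + γ` the window `[t - γ, t]` starts at `t₀`, where `hfi` says nothing
  have hfi' : IntervalIntegrable f volume (t - γ) t :=
    intervalIntegrable_of_intervalIntegral_le (sub_lt_self t hγ)
      (fun u hu => hf u (by linarith [hu.1]))
      (fun a ha => hfi a t (by linarith [ha.1]) ha.2.le) fun a ha =>
        integral_le_of_integral_window_le hf (by linarith [ha.1])
          (hfi a (a + γ) (by linarith [ha.1]) (by linarith)) (hA a (by linarith [ha.1]))
          ha.2.le (by linarith [ha.1])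
  obtain ⟨s, hs, hfs⟩ := exists_mem_Ioo_le_intervalIntegral_div (sub_lt_self t hγ) hfi'
  have hwindow := hA (t - γ) (by linarith)
  rw [sub_add_cancel] at hwindow
  rw [sub_sub_cancel] at hfs
  exact ⟨s, hs, hfs.trans (by gcongr)⟩

end Window

theorem uniform_gronwall_general (t₀ γ a₁ a₂ a₃ : ℝ) (g h y : ℝ → ℝ)
    (hγ : 0 < γ)
    (hg0 : ∀ t, t₀ < t → 0 ≤ g t) (hh0 : ∀ t, t₀ < t → 0 ≤ h t)
    (hy0 : ∀ t, t₀ < t → 0 ≤ y t)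
    (hint : ∀ s t : ℝ, t₀ < s → s ≤ t →
      IntervalIntegrable g volume s t ∧ IntervalIntegrable h volume s t ∧
        IntervalIntegrable y volume s t)
    (hdiff : ∀ s t : ℝ, t₀ < s → s ≤ t →
      y t - y s ≤ ∫ u in s..t, (g u * y u + h u))
    (hg : ∀ t, t₀ ≤ t → (∫ u in t..(t + γ), g u) ≤ a₁)
    (hh : ∀ t, t₀ ≤ t → (∫ u in t..(t + γ), h u) ≤ a₂)
    (hy : ∀ t, t₀ ≤ t → (∫ u in t..(t + γ), y u) ≤ a₃) :
    ∀ t, t₀ + γ ≤ t → y t ≤ (a₃ / γ + a₂) * Real.exp a₁ := by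
  intro t ht
  obtain ⟨s, ⟨hts, hst⟩, hys⟩ := exists_mem_Ioo_le_div_of_integral_window_le hγ hy0
    (fun a b ha hab => (hint a b ha hab).2.2) hy ht
  have hs₀ : t₀ < s := by linarith
  have hg0' : ∀ u ∈ Icc s t, 0 ≤ g u := fun u hu => hg0 u (hs₀.trans_le hu.1)
  have hh0' : ∀ u ∈ Icc s t, 0 ≤ h u := fun u hu => hh0 u (hs₀.trans_le hu.1)
  obtain ⟨hgi, hhi, -⟩ := hint s t hs₀ hst.le
  obtain ⟨hgw, hhw, -⟩ := hint s (s + γ) hs₀ (by linarith)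
  have hG := integral_le_of_integral_window_le hg0 hs₀.le hgw (hg s hs₀.le) hst.le (by linarith)
  have hH := integral_le_of_integral_window_le hh0 hs₀.le hhw (hh s hs₀.le) hst.le (by linarith)
  have hH0 : 0 ≤ ∫ u in s..t, h u := intervalIntegral.integral_nonneg hst.le hh0'
  calc y t ≤ (y s + ∫ u in s..t, h u) * Real.exp (∫ u in s..t, g u) :=
        le_mul_exp_integral_of_sub_le_integral hst.le hg0' hh0' (hy0 s hs₀) hgi hhi
          fun τ hτ => hdiff s τ hs₀ hτ.1
    _ ≤ (a₃ / γ + a₂) * Real.exp a₁ := by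
      gcongr
      linarith [hy0 s hs₀]

/-- The Uniform Gronwall Lemma: if y, g, h are nonnegative locally integrable functions on
(t₀, ∞), y satisfies y' ≤ g y + h (encoded in integrated form, i.e. y is absolutely
continuous with this differential inequality a.e.), and the sliding averages of g, h, y over
windows of length γ are bounded by a₁, a₂, a₃ respectively, then
y(t) ≤ (a₃/γ + a₂) e^{a₁} for all t ≥ t₀ + γ. -/
theorem uniform_gronwall (t₀ γ a₁ a₂ a₃ : ℝ) (g h y : ℝ → ℝ)
    (hγ : 0 < γ) (ha₁ : 0 < a₁) (ha₂ : 0 < a₂) (ha₃ : 0 < a₃)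
    (hg0 : ∀ t, t₀ < t → 0 ≤ g t) (hh0 : ∀ t, t₀ < t → 0 ≤ h t)
    (hy0 : ∀ t, t₀ < t → 0 ≤ y t)
    (hint : ∀ s t : ℝ, t₀ < s → s ≤ t →
      IntervalIntegrable g volume s t ∧ IntervalIntegrable h volume s t ∧
        IntervalIntegrable y volume s t)
    (hdiff : ∀ s t : ℝ, t₀ < s → s ≤ t →
      y t - y s ≤ ∫ u in s..t, (g u * y u + h u))
    (hg : ∀ t, t₀ ≤ t → (∫ u in t..(t + γ), g u) ≤ a₁)
    (hh : ∀ t, t₀ ≤ t → (∫ u in t..(t + γ), h u) ≤ a₂)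
    (hy : ∀ t, t₀ ≤ t → (∫ u in t..(t + γ), y u) ≤ a₃) :
    ∀ t, t₀ + γ ≤ t → y t ≤ (a₃ / γ + a₂) * Real.exp a₁ :=
  uniform_gronwall_general t₀ γ a₁ a₂ a₃ g h y hγ hg0 hh0 hy0 hint hdiff hg hh hy
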